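/- Quasi-stratified orders are projection-closed: if (Δ,≺) is a QS-order and Φ ⊆ Δ, then (Φ, ≺ restricted to Φ×Φ) is a QS-order. -/
import Mathlib


/-- Quasi-stratified orders: the smallest class of (finite domain, relation) pairs
containing (∅,∅), closed under adding a fresh unordered element, and under
sequential composition of disjoint-domain QS-orders. -/
inductive QSO {α : Type*} [DecidableEq α] : Finset α → (α → α → Prop) → Prop
  | empty : QSO ∅ (fun _ _ => False)
  | add {Δ : Finset α} {r : α → α → Prop} (x : α) (hx : x ∉ Δ) :
      QSO Δ r → QSO (insert x Δ) r
  | comp {Δ Δ' : Finset α} {r r' : α → α → Prop} (hd : Disjoint Δ Δ') :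
      QSO Δ r → QSO Δ' r' →
      QSO (Δ ∪ Δ') (fun a b => r a b ∨ r' a b ∨ (a ∈ Δ ∧ b ∈ Δ'))

lemma qso_congr {α : Type*} [DecidableEq α] {Δ : Finset α} {r r' : α → α → Prop}
    (h : QSO Δ r) (he : ∀ a b, r a b ↔ r' a b) : QSO Δ r' := by
  have : r = r' := by funext a b; exact propext (he a b)
  exact this ▸ h

lemma qso_dom {α : Type*} [DecidableEq α] {Δ : Finset α} {r : α → α → Prop}
    (h : QSO Δ r) : ∀ a b, r a b → a ∈ Δ ∧ b ∈ Δ := by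
  induction h with
  | empty => exact fun a b hab => hab.elim
  | add x hx h ih =>
      intro a b hab
      exact ⟨Finset.mem_insert_of_mem (ih a b hab).1,
             Finset.mem_insert_of_mem (ih a b hab).2⟩
  | comp hd h h' ih ih' =>
      intro a b hab
      rcases hab with hab | hab | ⟨ha, hb⟩
      · exact ⟨Finset.mem_union_left _ (ih a b hab).1,
               Finset.mem_union_left _ (ih a b hab).2⟩
      · exact ⟨Finset.mem_union_right _ (ih' a b hab).1,
               Finset.mem_union_right _ (ih' a b hab).2⟩
      · exact ⟨Finset.mem_union_left _ ha, Finset.mem_union_right _ hb⟩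

/-- QS-orders are projection-closed. -/
theorem qso_projection_closed {α : Type*} [DecidableEq α]
    (Δ : Finset α) (r : α → α → Prop) (h : QSO Δ r)
    (Φ : Finset α) (hΦ : Φ ⊆ Δ) :
    QSO Φ (fun a b => a ∈ Φ ∧ b ∈ Φ ∧ r a b) := by
  induction h generalizing Φ with
  | empty =>
      have : Φ = ∅ := Finset.subset_empty.mp hΦ
      subst this
      exact qso_congr QSO.empty (by simp)
  | @add Δ r x hx h ih =>
      by_cases hxΦ : x ∈ Φ
      · have hsub : Φ.erase x ⊆ Δ := by
          intro a ha
          have := hΦ (Finset.mem_of_mem_erase ha)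
          rcases Finset.mem_insert.mp this with h1 | h1
          · exact absurd h1 (Finset.ne_of_mem_erase ha)
          · exact h1
        have h1 := QSO.add x (Finset.notMem_erase x Φ) (ih (Φ.erase x) hsub)
        rw [Finset.insert_erase hxΦ] at h1
        refine qso_congr h1 ?_
        intro a b
        constructor
        · rintro ⟨ha, hb, hr⟩
          exact ⟨Finset.mem_of_mem_erase ha, Finset.mem_of_mem_erase hb, hr⟩
        · rintro ⟨ha, hb, hr⟩
          have hd := qso_dom h a b hr
          refine ⟨Finset.mem_erase.mpr ⟨?_, ha⟩, Finset.mem_erase.mpr ⟨?_, hb⟩, hr⟩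
          · rintro rfl; exact hx hd.1
          · rintro rfl; exact hx hd.2
      · have hsub : Φ ⊆ Δ := by
          intro a ha
          rcases Finset.mem_insert.mp (hΦ ha) with h1 | h1
          · exact absurd (h1 ▸ ha) hxΦ
          · exact h1
        exact ih Φ hsub
  | @comp Δ Δ' r r' hd h h' ih ih' =>
      have hd2 : Disjoint (Φ ∩ Δ) (Φ ∩ Δ') :=
        hd.mono (Finset.inter_subset_right) (Finset.inter_subset_right)
      have hcover : (Φ ∩ Δ) ∪ (Φ ∩ Δ') = Φ := by
        rw [← Finset.inter_union_distrib_left]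
        exact Finset.inter_eq_left.mpr hΦ
      have h1 := QSO.comp hd2 (ih (Φ ∩ Δ) Finset.inter_subset_right)
        (ih' (Φ ∩ Δ') Finset.inter_subset_right)
      rw [hcover] at h1
      refine qso_congr h1 ?_
      intro a b
      simp only [Finset.mem_inter]
      constructor
      · rintro (⟨⟨ha, _⟩, ⟨hb, _⟩, hr⟩ | ⟨⟨ha, _⟩, ⟨hb, _⟩, hr⟩ | ⟨⟨ha, ha'⟩, ⟨hb, hb'⟩⟩)
        · exact ⟨ha, hb, Or.inl hr⟩
        · exact ⟨ha, hb, Or.inr (Or.inl hr)⟩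
        · exact ⟨ha, hb, Or.inr (Or.inr ⟨ha', hb'⟩)⟩
      · rintro ⟨ha, hb, hr | hr | ⟨ha', hb'⟩⟩
        · have := qso_dom h a b hr
          exact Or.inl ⟨⟨ha, this.1⟩, ⟨hb, this.2⟩, hr⟩
        · have := qso_dom h' a b hr
          exact Or.inr (Or.inl ⟨⟨ha, this.1⟩, ⟨hb, this.2⟩, hr⟩)
        · exact Or.inr (Or.inr ⟨⟨ha, ha'⟩, ⟨hb, hb'⟩⟩)
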